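/- Fix constants κ > 1, c̄ > 0 and θ = 4c̄² + 1, and define φ(t,p) = e^{κ(T−t)}(θ − e^{−4c̄p}/2) on [0,T] × [0,1]. Then φ > 0, ∂_t φ = −κφ, ∂_p φ(t,p) = 2c̄ e^{κ(T−t)−4c̄p}, ∂_{pp} φ(t,p) = −8c̄² e^{κ(T−t)−4c̄p}, and for every t ∈ [0,T], p ∈ [0,1], and every v ∈ ℝ^d: κφ(t,p) − c̄·|∂_p φ(t,p)|·‖v‖ − (1/2)‖v‖²·∂_{pp}φ(t,p) ≥ 2c̄² e^{−4c̄p} (1 + ‖v‖²). -/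

import Mathlib

theorem stmt6 (T κ cbar θ : ℝ) (hT : 0 < T) (hκ : 1 < κ) (hc : 0 < cbar)
    (hθ : θ = 4 * cbar^2 + 1) (d : ℕ)
    (φ : ℝ → ℝ → ℝ)
    (hφ : ∀ t p, φ t p = Real.exp (κ * (T - t)) * (θ - Real.exp (-4 * cbar * p) / 2)) :
    (∀ t ∈ Set.Icc 0 T, ∀ p ∈ Set.Icc (0:ℝ) 1, 0 < φ t p) ∧
    (∀ p t : ℝ, HasDerivAt (fun s => φ s p) (-κ * φ t p) t) ∧
    (∀ t p : ℝ, HasDerivAt (fun q => φ t q)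
      (2 * cbar * Real.exp (κ * (T - t) - 4 * cbar * p)) p) ∧
    (∀ t p : ℝ, HasDerivAt (fun q => 2 * cbar * Real.exp (κ * (T - t) - 4 * cbar * q))
      (-8 * cbar^2 * Real.exp (κ * (T - t) - 4 * cbar * p)) p) ∧
    (∀ t ∈ Set.Icc 0 T, ∀ p ∈ Set.Icc (0:ℝ) 1, ∀ v : EuclideanSpace ℝ (Fin d),
      κ * φ t p - cbar * |2 * cbar * Real.exp (κ * (T - t) - 4 * cbar * p)| * ‖v‖
          - (1/2) * ‖v‖^2 * (-8 * cbar^2 * Real.exp (κ * (T - t) - 4 * cbar * p))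
        ≥ 2 * cbar^2 * Real.exp (-4 * cbar * p) * (1 + ‖v‖^2)) := by
  have hEsplit : ∀ t p : ℝ, Real.exp (κ * (T - t) - 4 * cbar * p)
      = Real.exp (κ * (T - t)) * Real.exp (-4 * cbar * p) := by
    intro t p
    rw [← Real.exp_add]; ring_nf
  refine ⟨?_, ?_, ?_, ?_, ?_⟩
  · intro t ht p hp
    rw [hφ]
    have he1 : Real.exp (-4 * cbar * p) ≤ 1 := by
      apply Real.exp_le_one_iff.mpr
      nlinarith [hp.1]
    have hθ' : 0 < θ - Real.exp (-4 * cbar * p) / 2 := by nlinarith [sq_nonneg cbar]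
    positivity
  · intro p t
    have h1 : HasDerivAt (fun s : ℝ => κ * (T - s)) (-κ) t := by
      simpa using ((hasDerivAt_id t).const_sub T).const_mul κ
    have h2 := (h1.exp).mul_const (θ - Real.exp (-4 * cbar * p) / 2)
    have : (fun s => φ s p) = fun s => Real.exp (κ * (T - s)) * (θ - Real.exp (-4 * cbar * p) / 2) := by
      funext s; rw [hφ]
    rw [this, hφ]
    refine h2.congr_deriv ?_; ring
  · intro t p
    have h1 : HasDerivAt (fun q : ℝ => -4 * cbar * q) (-4 * cbar) p := by
      simpa using (hasDerivAt_id p).const_mul (-4 * cbar)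
    have h2 := (((h1.exp).div_const 2).const_sub θ).const_mul (Real.exp (κ * (T - t)))
    have : (fun q => φ t q) = fun q => Real.exp (κ * (T - t)) * (θ - Real.exp (-4 * cbar * q) / 2) := by
      funext q; rw [hφ]
    rw [this]
    refine h2.congr_deriv ?_
    rw [hEsplit]; ring
  · intro t p
    have h1 : HasDerivAt (fun q : ℝ => κ * (T - t) - 4 * cbar * q) (-4 * cbar) p := by
      simpa using ((hasDerivAt_id p).const_mul (4 * cbar)).const_sub (κ * (T - t))
    have h2 := (h1.exp).const_mul (2 * cbar)
    refine h2.congr_deriv ?_; ring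
  · intro t ht p hp v
    set A := Real.exp (κ * (T - t)) with hAdef
    set e := Real.exp (-4 * cbar * p) with hedef
    have hA : 1 ≤ A := by
      apply Real.one_le_exp
      nlinarith [ht.2]
    have he0 : 0 < e := Real.exp_pos _
    have he1 : e ≤ 1 := by
      apply Real.exp_le_one_iff.mpr
      nlinarith [hp.1]
    rw [hφ, hEsplit, abs_of_nonneg (by positivity)]
    rw [← hAdef, ← hedef]
    have hA0 : (0:ℝ) < A := lt_of_lt_of_le one_pos hA
    have hx0 : (0:ℝ) ≤ ‖v‖ := norm_nonneg v
    have h1 : 0 ≤ cbar^2 * (A * e) * (‖v‖ - 1)^2 := by positivity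
    have h2 : 0 ≤ cbar^2 * (A - e) * ‖v‖^2 :=
      mul_nonneg (mul_nonneg (sq_nonneg _) (by linarith)) (sq_nonneg _)
    have h3 : 0 ≤ cbar^2 * (A - e) := mul_nonneg (sq_nonneg _) (by linarith)
    have h4 : 0 ≤ (κ - 1) * (A * (θ - e / 2)) := by
      have h : 0 < θ - e / 2 := by nlinarith [sq_nonneg cbar]
      exact mul_nonneg (by linarith) (le_of_lt (mul_pos hA0 h))
    have h5 : 0 ≤ A * (1 - e) := mul_nonneg (by linarith) (by linarith)
    have h6 : 0 ≤ cbar^2 * (A * (1 - e)) := mul_nonneg (sq_nonneg _) h5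
    have h7 : 0 ≤ cbar^2 * e * (A - 1) * ‖v‖^2 :=
      mul_nonneg (mul_nonneg (mul_nonneg (sq_nonneg _) he0.le) (by linarith)) (sq_nonneg _)
    have h8 : 0 ≤ cbar^2 * (1 - e) := mul_nonneg (sq_nonneg _) (by linarith)
    have h9 : 0 ≤ cbar^2 * (A - 1) := mul_nonneg (sq_nonneg _) (by linarith)
    have h10 : 0 ≤ cbar^2 * e * ‖v‖^2 :=
      mul_nonneg (mul_nonneg (sq_nonneg _) he0.le) (sq_nonneg _)
    nlinarith [sq_nonneg cbar, mul_pos he0 (mul_pos hc hc)]
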